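/- Let (x, X, y, Y₁₂, α) ∈ ℝ² × Sym₂(ℝ) × ℝ² × ℝ × ℝ² with α₁ = 0, y₂ − Y₁₂ > 0, and 0 ≤ x₂ − X₂₂ ≤ (y₂ − Y₁₂)/4. Define ρ := √(1 − 4(x₂−X₂₂)/(y₂−Y₁₂)), λ⁻ := (1−ρ)(y₂−Y₁₂)/2, and λ⁺ := (1+ρ)(y₂−Y₁₂)/2. If λ⁻ ≤ α₂ ≤ λ⁺, then the PSD condition (P4a) implies the PSD condition (P5); and if α₂ ≤ λ⁻ or α₂ ≥ λ⁺, then (P5) implies (P4a). -/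

import Mathlib

/-! Write s = y₂ − Y₁₂ and d = x₂ − X₂₂. The quadratic form of (P5) is that of (P4a), evaluated
at the coordinates other than the second, plus s t² + 2α₂ t v + (α₂ − d) v² in the second and last
coordinates t, v. For s > 0 this binary form is nonnegative iff α₂² ≤ (α₂ − d) s; otherwise its
minimum over t, attained at t = −α₂ v / s, is −(α₂² − (α₂ − d) s)/s · v². Finally
α₂² − (α₂ − d) s = (α₂ − λ⁻)(α₂ − λ⁺), so the position of α₂ relative to λ± decides the sign. -/

open Matrix

set_option linter.unusedVariables false

/-- Linear conditions (L). -/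
def Lcond (x1 x2 X11 X12 X22 y1 y2 Y12 a1 a2 : ℝ) : Prop :=
  X11 ≤ x1 ∧ x1 ≤ y1 ∧ X22 ≤ x2 ∧ x2 ≤ y2 ∧
  max 0 (x1 - a1 + x2 - a2 - Y12) ≤ X12 ∧ X12 ≤ min (x1 - a1) (x2 - a2) ∧
  0 ≤ a1 ∧ a1 ≤ y1 - Y12 ∧ 0 ≤ a2 ∧ a2 ≤ y2 - Y12 ∧
  max 0 (y1 + y2 - 1) ≤ Y12 ∧ Y12 ≤ min y1 y2

/-- PSD condition (P3). -/
def P3cond (x1 x2 X11 X12 X22 y1 y2 Y12 a1 a2 : ℝ) : Prop :=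
  (!![Y12, x1 - a1, x2 - a2;
      x1 - a1, x1 - a1, X12;
      x2 - a2, X12, x2 - a2] : Matrix (Fin 3) (Fin 3) ℝ).PosSemidef

/-- PSD condition (P4a). -/
def P4acond (x1 x2 X11 X12 X22 y1 y2 Y12 a1 a2 : ℝ) : Prop :=
  (!![y1 - Y12, 0, a1, 0;
      0, Y12, x1 - a1, x2 - a2;
      a1, x1 - a1, X11, X12;
      0, x2 - a2, X12, x2 - a2] : Matrix (Fin 4) (Fin 4) ℝ).PosSemidef

/-- PSD condition (P4b). -/
def P4bcond (x1 x2 X11 X12 X22 y1 y2 Y12 a1 a2 : ℝ) : Prop :=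
  (!![y2 - Y12, 0, 0, a2;
      0, Y12, x1 - a1, x2 - a2;
      0, x1 - a1, x1 - a1, X12;
      a2, x2 - a2, X12, X22] : Matrix (Fin 4) (Fin 4) ℝ).PosSemidef

/-- PSD condition (P5). -/
def P5cond (x1 x2 X11 X12 X22 y1 y2 Y12 a1 a2 : ℝ) : Prop :=
  (!![y1 - Y12, 0, 0, a1, 0;
      0, y2 - Y12, 0, 0, a2;
      0, 0, Y12, x1 - a1, x2 - a2;
      a1, 0, x1 - a1, X11, X12;
      0, a2, x2 - a2, X12, X22] : Matrix (Fin 5) (Fin 5) ℝ).PosSemidef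

theorem binary_quadratic_nonneg_of_sq_le_mul {s a c : ℝ} (hs : 0 < s) (h : a ^ 2 ≤ c * s)
    (t v : ℝ) : 0 ≤ s * t ^ 2 + 2 * a * t * v + c * v ^ 2 := by
  have hscaled : 0 ≤ s * (s * t ^ 2 + 2 * a * t * v + c * v ^ 2) := by
    have hsq : s * (s * t ^ 2 + 2 * a * t * v + c * v ^ 2) =
        (s * t + a * v) ^ 2 + (c * s - a ^ 2) * v ^ 2 := by ring
    have := sub_nonneg.2 h
    rw [hsq]
    positivity
  exact nonneg_of_mul_nonneg_right (by linarith) hs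

theorem sub_mul_sub_roots_eq {s d : ℝ} (hs : s ≠ 0) (hd : 4 * d / s ≤ 1) (a : ℝ) :
    (a - (1 - √(1 - 4 * d / s)) * s / 2) * (a - (1 + √(1 - 4 * d / s)) * s / 2) =
      a ^ 2 - (a - d) * s := by
  have hexpand : (a - (1 - √(1 - 4 * d / s)) * s / 2) * (a - (1 + √(1 - 4 * d / s)) * s / 2) =
      a ^ 2 - a * s + (1 - √(1 - 4 * d / s) ^ 2) * s ^ 2 / 4 := by ring
  rw [hexpand, Real.sq_sqrt (sub_nonneg.2 hd)]
  field_simp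
  ring

def P4aMatrix (x1 x2 X11 X12 y1 Y12 a1 a2 : ℝ) : Matrix (Fin 4) (Fin 4) ℝ :=
  !![y1 - Y12, 0, a1, 0;
     0, Y12, x1 - a1, x2 - a2;
     a1, x1 - a1, X11, X12;
     0, x2 - a2, X12, x2 - a2]

def P5Matrix (x1 x2 X11 X12 X22 y1 y2 Y12 a1 a2 : ℝ) : Matrix (Fin 5) (Fin 5) ℝ :=
  !![y1 - Y12, 0, 0, a1, 0;
     0, y2 - Y12, 0, 0, a2;
     0, 0, Y12, x1 - a1, x2 - a2;
     a1, 0, x1 - a1, X11, X12;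
     0, a2, x2 - a2, X12, X22]

section

variable {x1 x2 X11 X12 X22 y1 y2 Y12 a1 a2 : ℝ}

theorem P4acond_iff : P4acond x1 x2 X11 X12 X22 y1 y2 Y12 a1 a2 ↔
    (P4aMatrix x1 x2 X11 X12 y1 Y12 a1 a2).PosSemidef := Iff.rfl

theorem P5cond_iff : P5cond x1 x2 X11 X12 X22 y1 y2 Y12 a1 a2 ↔
    (P5Matrix x1 x2 X11 X12 X22 y1 y2 Y12 a1 a2).PosSemidef := Iff.rfl

theorem P4aMatrix_isHermitian : (P4aMatrix x1 x2 X11 X12 y1 Y12 a1 a2).IsHermitian := by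
  ext i j
  fin_cases i <;> fin_cases j <;> rfl

theorem P5Matrix_isHermitian : (P5Matrix x1 x2 X11 X12 X22 y1 y2 Y12 a1 a2).IsHermitian := by
  ext i j
  fin_cases i <;> fin_cases j <;> rfl

theorem dotProduct_P5Matrix_mulVec (u : Fin 5 → ℝ) :
    u ⬝ᵥ P5Matrix x1 x2 X11 X12 X22 y1 y2 Y12 a1 a2 *ᵥ u =
      ![u 0, u 2, u 3, u 4] ⬝ᵥ P4aMatrix x1 x2 X11 X12 y1 Y12 a1 a2 *ᵥ ![u 0, u 2, u 3, u 4] +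
        ((y2 - Y12) * u 1 ^ 2 + 2 * a2 * u 1 * u 4 + (a2 - (x2 - X22)) * u 4 ^ 2) := by
  simp only [dotProduct, mulVec, P5Matrix, P4aMatrix, of_apply, cons_val', cons_val_fin_one,
    Fin.sum_univ_five, Fin.sum_univ_four, cons_val_zero, cons_val_one, cons_val]
  ring

theorem P5cond_of_P4acond (hs : 0 < y2 - Y12) (ha : a2 ^ 2 ≤ (a2 - (x2 - X22)) * (y2 - Y12))
    (h : P4acond x1 x2 X11 X12 X22 y1 y2 Y12 a1 a2) :
    P5cond x1 x2 X11 X12 X22 y1 y2 Y12 a1 a2 := by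
  rw [P4acond_iff, posSemidef_iff_dotProduct_mulVec] at h
  rw [P5cond_iff, posSemidef_iff_dotProduct_mulVec]
  refine ⟨P5Matrix_isHermitian, fun u => ?_⟩
  have h4 := h.2 ![u 0, u 2, u 3, u 4]
  have hbinary := binary_quadratic_nonneg_of_sq_le_mul hs ha (u 1) (u 4)
  rw [star_trivial] at h4 ⊢
  rw [dotProduct_P5Matrix_mulVec]
  linarith

theorem P4acond_of_P5cond (hs : 0 < y2 - Y12) (ha : (a2 - (x2 - X22)) * (y2 - Y12) ≤ a2 ^ 2)
    (h : P5cond x1 x2 X11 X12 X22 y1 y2 Y12 a1 a2) :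
    P4acond x1 x2 X11 X12 X22 y1 y2 Y12 a1 a2 := by
  rw [P5cond_iff, posSemidef_iff_dotProduct_mulVec] at h
  rw [P4acond_iff, posSemidef_iff_dotProduct_mulVec]
  refine ⟨P4aMatrix_isHermitian, fun w => ?_⟩
  have h5 := h.2 ![w 0, -(a2 * w 3) / (y2 - Y12), w 1, w 2, w 3]
  have hw : ![w 0, w 1, w 2, w 3] = w := by
    ext i
    fin_cases i <;> rfl
  have hvertex : (y2 - Y12) * (-(a2 * w 3) / (y2 - Y12)) ^ 2 +
      2 * a2 * (-(a2 * w 3) / (y2 - Y12)) * w 3 + (a2 - (x2 - X22)) * w 3 ^ 2 =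
        -((a2 ^ 2 - (a2 - (x2 - X22)) * (y2 - Y12)) / (y2 - Y12) * w 3 ^ 2) := by
    field_simp
    ring
  have hgap : 0 ≤ (a2 ^ 2 - (a2 - (x2 - X22)) * (y2 - Y12)) / (y2 - Y12) * w 3 ^ 2 := by
    have := sub_nonneg.2 ha
    positivity
  rw [star_trivial, dotProduct_P5Matrix_mulVec] at h5
  simp only [Matrix.cons_val] at h5
  rw [hw, hvertex] at h5
  rw [star_trivial]
  linarith

end

theorem stmt11 (x1 x2 X11 X12 X22 y1 y2 Y12 a2 : ℝ)
    (hy : 0 < y2 - Y12) (h2 : x2 - X22 ≤ (y2 - Y12) / 4) :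
    ((1 - Real.sqrt (1 - 4 * (x2 - X22) / (y2 - Y12))) * (y2 - Y12) / 2 ≤ a2 ∧
      a2 ≤ (1 + Real.sqrt (1 - 4 * (x2 - X22) / (y2 - Y12))) * (y2 - Y12) / 2 →
        (P4acond x1 x2 X11 X12 X22 y1 y2 Y12 0 a2 →
          P5cond x1 x2 X11 X12 X22 y1 y2 Y12 0 a2)) ∧
    ((a2 ≤ (1 - Real.sqrt (1 - 4 * (x2 - X22) / (y2 - Y12))) * (y2 - Y12) / 2 ∨
      (1 + Real.sqrt (1 - 4 * (x2 - X22) / (y2 - Y12))) * (y2 - Y12) / 2 ≤ a2) →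
        (P5cond x1 x2 X11 X12 X22 y1 y2 Y12 0 a2 →
          P4acond x1 x2 X11 X12 X22 y1 y2 Y12 0 a2)) := by
  have hdisc : 4 * (x2 - X22) / (y2 - Y12) ≤ 1 := by
    rw [div_le_one hy]
    linarith
  have hfactor := sub_mul_sub_roots_eq hy.ne' hdisc a2
  have hroots : (1 - √(1 - 4 * (x2 - X22) / (y2 - Y12))) * (y2 - Y12) / 2 ≤
      (1 + √(1 - 4 * (x2 - X22) / (y2 - Y12))) * (y2 - Y12) / 2 := by
    nlinarith [mul_nonneg (Real.sqrt_nonneg (1 - 4 * (x2 - X22) / (y2 - Y12))) hy.le]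
  refine ⟨fun ⟨hlo, hhi⟩ => P5cond_of_P4acond hy ?_, fun hout => P4acond_of_P5cond hy ?_⟩
  · rw [← sub_nonpos, ← hfactor]
    exact mul_nonpos_of_nonneg_of_nonpos (sub_nonneg.2 hlo) (sub_nonpos.2 hhi)
  · rw [← sub_nonneg, ← hfactor]
    rcases hout with hlo | hhi
    · exact mul_nonneg_of_nonpos_of_nonpos (sub_nonpos.2 hlo) (sub_nonpos.2 (hlo.trans hroots))
    · exact mul_nonneg (sub_nonneg.2 (hroots.trans hhi)) (sub_nonneg.2 hhi)
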